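/- For every n ≥ 1, the map φ on S̄_n defined by 'box (i,j) of φ(S) contains α if and only if box (j,i) of S contains β, and box (i,j) of φ(S) contains β if and only if box (j,i) of S contains α' is a well-defined involution of S̄_n satisfying N_α(φ(S)) = N_β(S) and N_β(φ(S)) = N_α(S), and for each j ∈ {1,…,n−1}, φ(S)(j) = α if and only if S(n−j) = β (where T(j) denotes the content of the second-main-diagonal box (n−j,j) of T ∈ S̄_n). Consequently, for all α, β > 0 and every integer k ≥ 0, the probability that the second main diagonal of S_{n,α,β} contains exactly k β's equals the probability that the second main diagonal of S_{n,β,α} contains exactly k α's. -/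

import Mathlib

/-- The two symbols α, β that may fill a box of an α/β-staircase tableau. -/
inductive ABSymbol : Type
  | A : ABSymbol  -- α
  | B : ABSymbol  -- β
  deriving DecidableEq

instance instFintypeABSymbol : Fintype ABSymbol :=
  ⟨{ABSymbol.A, ABSymbol.B}, fun x => by cases x <;> simp⟩

/-- `f` is an α/β-staircase tableau of size `n`.  Boxes are indexed `0`-based, so
the box `(i, j)` (with `1 ≤ i, j` and `i + j ≤ n + 1` in the `1`-based indexing of
the paper) corresponds to `f ⟨i-1⟩ ⟨j-1⟩`; the condition `i + j ≤ n + 1` becomes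
`(i-1) + (j-1) < n`, and the main diagonal `i + j = n + 1` becomes
`(i-1) + (j-1) + 1 = n`. -/
def IsABStaircase (n : ℕ) (f : Fin n → Fin n → Option ABSymbol) : Prop :=
  (∀ i j : Fin n, n ≤ (i : ℕ) + (j : ℕ) → f i j = none) ∧
  (∀ i j i' : Fin n, f i j = some ABSymbol.A → i' < i → f i' j = none) ∧
  (∀ i j j' : Fin n, f i j = some ABSymbol.B → j' < j → f i j' = none) ∧
  (∀ i j : Fin n, (i : ℕ) + (j : ℕ) + 1 = n → f i j ≠ none)

/-- `N_α(f)`, the number of α's in `f`. -/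
def NA (n : ℕ) (f : Fin n → Fin n → Option ABSymbol) : ℕ :=
  (Finset.univ.filter (fun p : Fin n × Fin n => f p.1 p.2 = some ABSymbol.A)).card

/-- `N_β(f)`, the number of β's in `f`. -/
def NB (n : ℕ) (f : Fin n → Fin n → Option ABSymbol) : ℕ :=
  (Finset.univ.filter (fun p : Fin n × Fin n => f p.1 p.2 = some ABSymbol.B)).card

/-- The weight `wt(f) = α^{N_α(f)} β^{N_β(f)}`. -/
noncomputable def wt (α β : ℝ) (n : ℕ) (f : Fin n → Fin n → Option ABSymbol) : ℝ :=
  α ^ NA n f * β ^ NB n f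

open scoped Classical in
/-- The partition function `Z_n(α, β) = Σ_{S ∈ S̄_n} wt(S)`. -/
noncomputable def Z (α β : ℝ) (n : ℕ) : ℝ :=
  ∑ f ∈ Finset.univ.filter
      (fun f : Fin n → Fin n → Option ABSymbol => IsABStaircase n f),
    wt α β n f

open scoped Classical in
/-- The probability that the random tableau `S_{n,α,β}` lies in the event `E`. -/
noncomputable def stProb (α β : ℝ) (n : ℕ)
    (E : (Fin n → Fin n → Option ABSymbol) → Prop) : ℝ :=
  (∑ f ∈ Finset.univ.filter
      (fun f : Fin n → Fin n → Option ABSymbol => IsABStaircase n f ∧ E f),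
    wt α β n f) / Z α β n

open scoped Classical in
/-- The expectation of `g` under the law of the random tableau `S_{n,α,β}`. -/
noncomputable def stExp (α β : ℝ) (n : ℕ)
    (g : (Fin n → Fin n → Option ABSymbol) → ℝ) : ℝ :=
  (∑ f ∈ Finset.univ.filter
      (fun f : Fin n → Fin n → Option ABSymbol => IsABStaircase n f),
    wt α β n f * g f) / Z α β n

/-- `diag2 f j` is the content of the second-main-diagonal box `(n - j, j)`
(in the `1`-based indexing of the paper), defined for `1 ≤ j ≤ n - 1`. -/
def diag2 {n : ℕ} (f : Fin n → Fin n → Option ABSymbol) (j : ℕ) : Option ABSymbol :=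
  if h : 1 ≤ j ∧ j + 1 ≤ n then f ⟨n - j - 1, by omega⟩ ⟨j - 1, by omega⟩ else none

/-- `A_n`, the number of α's on the second main diagonal of `f`. -/
def Acount (n : ℕ) (f : Fin n → Fin n → Option ABSymbol) : ℕ :=
  ((Finset.Icc 1 (n - 1)).filter (fun j => diag2 f j = some ABSymbol.A)).card

/-- `B_n`, the number of β's on the second main diagonal of `f`. -/
def Bcount (n : ℕ) (f : Fin n → Fin n → Option ABSymbol) : ℕ :=
  ((Finset.Icc 1 (n - 1)).filter (fun j => diag2 f j = some ABSymbol.B)).card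

/-- `X_n`, the number of nonempty boxes on the second main diagonal of `f`. -/
def Xcount (n : ℕ) (f : Fin n → Fin n → Option ABSymbol) : ℕ :=
  ((Finset.Icc 1 (n - 1)).filter (fun j => diag2 f j ≠ none)).card

/-- `J_{r,m}`: the set of `r`-tuples `1 ≤ j_1 < … < j_r ≤ m` with
`j_k ≤ j_{k+1} - 2` for all `k`. -/
def Jset (r m : ℕ) : Finset (Fin r → ℕ) :=
  (Fintype.piFinset (fun _ : Fin r => Finset.Icc 1 m)).filter
    (fun j => ∀ k l : Fin r, k < l → j k + 2 ≤ j l)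

/-- The swap α ↔ β on symbols. -/
def swapSym : ABSymbol → ABSymbol
  | ABSymbol.A => ABSymbol.B
  | ABSymbol.B => ABSymbol.A

/-- The map φ: transpose the tableau and interchange α's and β's, so that box
`(i,j)` of `φ(S)` contains α iff box `(j,i)` of `S` contains β, and vice versa. -/
def flipTab (n : ℕ) (f : Fin n → Fin n → Option ABSymbol) :
    Fin n → Fin n → Option ABSymbol :=
  fun i j => (f j i).map swapSym

/-!
The map φ transposes a tableau and swaps the symbols, so the column condition on α's
becomes the row condition on β's and vice versa, while the shape and its main diagonal are
symmetric. Hence φ is an involution of `S̄_n` with `wt_{β,α}(φ S) = wt_{α,β}(S)`, and it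
sends the second-diagonal box at `j` to the one at `n - j`, turning β's into α's there.
Summing over this weight-preserving bijection gives the identity of probabilities.
-/

abbrev Tableau (n : ℕ) := Fin n → Fin n → Option ABSymbol

lemma swapSym_involutive : Function.Involutive swapSym := by
  intro s; cases s <;> rfl

lemma Option.map_swapSym_eq_some (o : Option ABSymbol) (s : ABSymbol) :
    o.map swapSym = some s ↔ o = some (swapSym s) := by
  cases o with
  | none => simp
  | some t => cases s <;> cases t <;> simp [swapSym]

section flipTab

variable {n : ℕ}

lemma flipTab_involutive : Function.Involutive (flipTab n) := by
  intro f
  funext i j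
  simp only [flipTab, Option.map_map, swapSym_involutive.comp_self, Option.map_id, id]

lemma IsABStaircase.flipTab {f : Tableau n} (hf : IsABStaircase n f) :
    IsABStaircase n (flipTab n f) := by
  obtain ⟨hshape, hcolA, hrowB, hdiag⟩ := hf
  refine ⟨fun i j hij => ?_, fun i j i' hA hi' => ?_, fun i j j' hB hj' => ?_,
    fun i j hij => ?_⟩ <;>
    simp only [_root_.flipTab, Option.map_eq_none_iff, ne_eq,
      Option.map_swapSym_eq_some, swapSym] at *
  · exact hshape j i (by omega)
  · exact hrowB j i i' hA hi'
  · exact hcolA j i j' hB hj'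
  · exact hdiag j i (by omega)

lemma isABStaircase_flipTab_iff {f : Tableau n} :
    IsABStaircase n (flipTab n f) ↔ IsABStaircase n f :=
  ⟨fun h => flipTab_involutive f ▸ h.flipTab, IsABStaircase.flipTab⟩

lemma NA_flipTab (f : Tableau n) : NA n (flipTab n f) = NB n f :=
  Finset.card_equiv (Equiv.prodComm _ _) fun p => by
    simp only [Finset.mem_filter, Finset.mem_univ, true_and, flipTab, Equiv.prodComm_apply,
      Prod.fst_swap, Prod.snd_swap, Option.map_swapSym_eq_some, swapSym]

lemma NB_flipTab (f : Tableau n) : NB n (flipTab n f) = NA n f := by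
  rw [← NA_flipTab, flipTab_involutive]

lemma wt_flipTab (α β : ℝ) (f : Tableau n) : wt β α n (flipTab n f) = wt α β n f := by
  rw [wt, wt, NA_flipTab, NB_flipTab, mul_comm]

lemma diag2_flipTab (f : Tableau n) {j : ℕ} (hj : 1 ≤ j) (hjn : j ≤ n - 1) :
    diag2 (flipTab n f) j = (diag2 f (n - j)).map swapSym := by
  rw [diag2, diag2, dif_pos (by omega), dif_pos (by omega)]
  simp only [flipTab, show n - (n - j) - 1 = j - 1 by omega]

lemma Acount_flipTab (f : Tableau n) : Acount n (flipTab n f) = Bcount n f := by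
  refine Finset.card_nbij' (n - ·) (n - ·) ?_ ?_ ?_ ?_ <;>
    simp only [Finset.coe_filter, Finset.mem_Icc, Set.MapsTo, Set.LeftInvOn,
      Set.mem_ofPred_eq, and_imp] <;> intro j hj hjn
  · intro hA
    rw [diag2_flipTab f hj hjn, Option.map_swapSym_eq_some] at hA
    exact ⟨⟨by omega, by omega⟩, hA⟩
  · intro hB
    rw [diag2_flipTab f (by omega) (by omega), Option.map_swapSym_eq_some,
      show n - (n - j) = j by omega]
    exact ⟨⟨by omega, by omega⟩, hB⟩
  all_goals intro; omega

lemma Bcount_flipTab (f : Tableau n) : Bcount n (flipTab n f) = Acount n f := by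
  rw [← Acount_flipTab, flipTab_involutive]

lemma Z_comm (α β : ℝ) : Z α β n = Z β α n := by
  classical
  refine Finset.sum_equiv (flipTab_involutive.toPerm _) (fun f => ?_) (fun f _ => ?_)
  · simp [isABStaircase_flipTab_iff]
  · exact (wt_flipTab α β f).symm

lemma stProb_flipTab (α β : ℝ) (E : Tableau n → Prop) :
    stProb α β n E = stProb β α n (fun f => E (flipTab n f)) := by
  classical
  rw [stProb, stProb, Z_comm α β]
  congr 1
  refine Finset.sum_equiv (flipTab_involutive.toPerm _) (fun f => ?_) (fun f _ => ?_)
  · simp [isABStaircase_flipTab_iff, flipTab_involutive f]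
  · exact (wt_flipTab α β f).symm

end flipTab

theorem stmt16_general (n : ℕ) :
    (∀ f : Fin n → Fin n → Option ABSymbol,
      IsABStaircase n f → IsABStaircase n (flipTab n f)) ∧
    (∀ f : Fin n → Fin n → Option ABSymbol, flipTab n (flipTab n f) = f) ∧
    (∀ f : Fin n → Fin n → Option ABSymbol,
      NA n (flipTab n f) = NB n f ∧ NB n (flipTab n f) = NA n f) ∧
    (∀ f : Fin n → Fin n → Option ABSymbol, ∀ j : ℕ, 1 ≤ j → j ≤ n - 1 →
      (diag2 (flipTab n f) j = some ABSymbol.A ↔ diag2 f (n - j) = some ABSymbol.B)) ∧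
    (∀ α β : ℝ, 0 < α → 0 < β → ∀ k : ℕ,
      stProb α β n (fun f => Bcount n f = k) = stProb β α n (fun f => Acount n f = k)) := by
  refine ⟨fun f hf => hf.flipTab, flipTab_involutive, fun f => ⟨NA_flipTab f, NB_flipTab f⟩,
    fun f j hj hjn => ?_, fun α β _ _ k => ?_⟩
  · rw [diag2_flipTab f hj hjn, Option.map_swapSym_eq_some]
    rfl
  · simp only [stProb_flipTab α β, Bcount_flipTab]

/-- φ is a well-defined involution of `S̄_n` interchanging the α- and β-counts,
sending the second-main-diagonal content at `j` to the content at `n - j` with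
the symbols swapped; consequently `P(B_n = k)` for `S_{n,α,β}` equals
`P(A_n = k)` for `S_{n,β,α}`. -/
theorem stmt16 (n : ℕ) (hn : 1 ≤ n) :
    (∀ f : Fin n → Fin n → Option ABSymbol,
      IsABStaircase n f → IsABStaircase n (flipTab n f)) ∧
    (∀ f : Fin n → Fin n → Option ABSymbol, flipTab n (flipTab n f) = f) ∧
    (∀ f : Fin n → Fin n → Option ABSymbol,
      NA n (flipTab n f) = NB n f ∧ NB n (flipTab n f) = NA n f) ∧
    (∀ f : Fin n → Fin n → Option ABSymbol, ∀ j : ℕ, 1 ≤ j → j ≤ n - 1 →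
      (diag2 (flipTab n f) j = some ABSymbol.A ↔ diag2 f (n - j) = some ABSymbol.B)) ∧
    (∀ α β : ℝ, 0 < α → 0 < β → ∀ k : ℕ,
      stProb α β n (fun f => Bcount n f = k) = stProb β α n (fun f => Acount n f = k)) :=
  stmt16_general n
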